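/- Let I be an ideal of a ring R. Then the following are equivalent: (1) R/I is strongly P-clean; (2) R/Iⁿ is strongly P-clean for some positive integer n; (3) R/Iⁿ is strongly P-clean for all positive integers n. -/

import Mathlib

/-- An element `a` of a ring is strongly nilpotent if every sequence
`a = a₀, a₁, a₂, …` with `a_{i+1} ∈ a_i R a_i` is eventually zero. -/
def IsStronglyNilpotent {R : Type*} [Ring R] (a : R) : Prop :=
  ∀ f : ℕ → R, f 0 = a → (∀ i, ∃ r : R, f (i + 1) = f i * r * f i) → ∃ n, f n = 0

/-- The prime radical `P(R)`: the set of strongly nilpotent elements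
(equivalently, the intersection of all prime ideals). -/
def primeRadical (R : Type*) [Ring R] : Set R :=
  {a | IsStronglyNilpotent a}

/-- An element is strongly P-clean if it is the sum of an idempotent and an
element of the prime radical that commute. -/
def IsStronglyPClean {R : Type*} [Ring R] (x : R) : Prop :=
  ∃ e w : R, IsIdempotentElem e ∧ w ∈ primeRadical R ∧ x = e + w ∧ e * w = w * e

/-- A ring is strongly P-clean if each of its elements is strongly P-clean. -/
def StronglyPCleanRing (R : Type*) [Ring R] : Prop :=
  ∀ x : R, IsStronglyPClean x
/-- The `n`-th power of a two-sided ideal: the two-sided ideal generated by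
products of `n` elements of `I`. -/
def TwoSidedIdeal.idealPow {R : Type*} [Ring R] (I : TwoSidedIdeal R) (n : ℕ) :
    TwoSidedIdeal R :=
  TwoSidedIdeal.span {x | ∃ f : Fin n → R, (∀ i, f i ∈ I) ∧ x = (List.ofFn f).prod}


/-!
The natural map `R/Iⁿ → R/I` is surjective, and its kernel `I/Iⁿ` lies in the prime radical:
a sequence `a_{i+1} ∈ a_i R a_i` starting in `I` has `a_i ∈ I^(i+1)`. Strong P-cleanness passes
to surjective images, and it lifts along any ring map `φ : S → T` whose kernel lies in `P(S)`.
For the lift, write `φ x = e' + w'`. Then `φ (x - x²) ∈ w' T ⊆ P(T)`, so `x - x²` is strongly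
nilpotent, hence nilpotent, and `e = 1 - (1 - x^N)^N` is an idempotent commuting with `x` for
large `N`. Since `e'^N = e'` and `(1 - e')^N = 1 - e'`, also `φ (x - e) ∈ w' T`, so `x - e ∈ P(S)`.
-/

namespace IsStronglyNilpotent

variable {S T : Type*} [Ring S] [Ring T]

theorem exists_lift_seq_of_surjective (φ : S →+* T) (hφ : Function.Surjective φ) (a : S)
    {f : ℕ → T} (hf0 : f 0 = φ a) (hf : ∀ i, ∃ r, f (i + 1) = f i * r * f i) :
    ∃ g : ℕ → S, g 0 = a ∧ (∀ i, ∃ r, g (i + 1) = g i * r * g i) ∧ ∀ i, φ (g i) = f i := by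
  choose r hr using hf
  choose s hs using fun i => hφ (r i)
  let g : ℕ → S := fun n => Nat.rec a (fun i gi => gi * s i * gi) n
  refine ⟨g, rfl, fun i => ⟨s i, rfl⟩, fun i => ?_⟩
  induction i with
  | zero => exact hf0.symm
  | succ i ih => rw [hr i, ← ih, ← hs i, ← map_mul, ← map_mul]

theorem mul_right {a : S} (ha : IsStronglyNilpotent a) (d : S) :
    IsStronglyNilpotent (a * d) := by
  intro f hf0 hf
  choose r hr using hf
  let g : ℕ → S := fun n => Nat.rec a (fun i gi => gi * (d * r i) * gi) n
  have hfg : ∀ i, f i = g i * d := by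
    intro i
    induction i with
    | zero => exact hf0
    | succ i ih => rw [hr i, ih]; simp only [g, mul_assoc]
  obtain ⟨n, hn⟩ := ha g rfl fun i => ⟨d * r i, rfl⟩
  exact ⟨n, by rw [hfg n, hn, zero_mul]⟩

theorem map (φ : S →+* T) (hφ : Function.Surjective φ) {a : S} (ha : IsStronglyNilpotent a) :
    IsStronglyNilpotent (φ a) := by
  intro f hf0 hf
  obtain ⟨g, hg0, hg, hφg⟩ := exists_lift_seq_of_surjective φ hφ a hf0 hf
  obtain ⟨n, hn⟩ := ha g hg0 hg
  exact ⟨n, by rw [← hφg n, hn, map_zero]⟩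

theorem of_map (φ : S →+* T) (hker : ∀ k, φ k = 0 → IsStronglyNilpotent k) {a : S}
    (ha : IsStronglyNilpotent (φ a)) : IsStronglyNilpotent a := by
  intro f hf0 hf
  obtain ⟨n, hn⟩ := ha (fun i => φ (f i)) (by rw [hf0]) fun i => by
    obtain ⟨r, hr⟩ := hf i
    exact ⟨φ r, by simp only [hr, map_mul]⟩
  obtain ⟨m, hm⟩ := hker (f n) hn (fun i => f (n + i)) rfl fun i => hf (n + i)
  exact ⟨n + m, hm⟩

theorem isNilpotent {a : S} (ha : IsStronglyNilpotent a) : IsNilpotent a := by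
  obtain ⟨n, hn⟩ := ha (fun i => a ^ 2 ^ i) (pow_one a) fun i =>
    ⟨1, by rw [mul_one, ← pow_add, ← two_mul, ← pow_succ']⟩
  exact ⟨2 ^ n, hn⟩

end IsStronglyNilpotent

namespace IsIdempotentElem

variable {T : Type*} [Ring T] {e w : T}

theorem add_sub_add_sq (he : IsIdempotentElem e) (hew : Commute e w) :
    e + w - (e + w) ^ 2 = w * (1 - 2 * e - w) := by
  rw [sq, add_mul, mul_add, mul_add, he.eq, hew.eq]
  noncomm_ring

theorem exists_add_sub_one_sub_one_sub_pow_pow_eq_mul (he : IsIdempotentElem e)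
    (hew : Commute e w) {N : ℕ} (hN : N ≠ 0) :
    ∃ c, e + w - (1 - (1 - (e + w) ^ N) ^ N) = w * c := by
  have hx : Commute e (e + w) := (Commute.refl e).add_right hew
  have hab : Commute (1 - e) (1 - (e + w) ^ N) :=
    (Commute.one_left _).sub_left ((Commute.one_right e).sub_right (hx.pow_right N))
  obtain ⟨c₁, hc₁⟩ := hab.sub_dvd_pow_sub_pow N
  obtain ⟨c₂, hc₂⟩ := hx.symm.sub_dvd_pow_sub_pow N
  rw [he.pow_eq hN, add_sub_cancel_left] at hc₂
  rw [he.one_sub.pow_eq hN, sub_sub_sub_cancel_left, hc₂, mul_assoc] at hc₁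
  exact ⟨1 - c₂ * c₁, by rw [mul_sub, mul_one, ← hc₁]; abel⟩

end IsIdempotentElem

section StronglyPClean

variable {S T : Type*} [Ring S] [Ring T]

theorem IsStronglyPClean.map (φ : S →+* T) (hφ : Function.Surjective φ) {x : S}
    (hx : IsStronglyPClean x) : IsStronglyPClean (φ x) := by
  obtain ⟨e, w, he, hw, rfl, hew⟩ := hx
  exact ⟨φ e, φ w, he.map φ, hw.map φ hφ, map_add φ e w, by rw [← map_mul, hew, map_mul]⟩

theorem StronglyPCleanRing.of_surjective (φ : S →+* T) (hφ : Function.Surjective φ)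
    (h : StronglyPCleanRing S) : StronglyPCleanRing T := fun x => by
  obtain ⟨y, rfl⟩ := hφ x
  exact (h y).map φ hφ

theorem IsStronglyPClean.of_map (φ : S →+* T) (hker : ∀ k, φ k = 0 → IsStronglyNilpotent k)
    {x : S} (hx : IsStronglyPClean (φ x)) : IsStronglyPClean x := by
  obtain ⟨e', w', he', hw', hxew, hew⟩ := hx
  have hcomm : Commute e' w' := hew
  have hw'_mul (c : T) : IsStronglyNilpotent (w' * c) := IsStronglyNilpotent.mul_right hw' c
  obtain ⟨m, hm⟩ : IsNilpotent (x - x ^ 2) := by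
    refine (IsStronglyNilpotent.of_map φ hker ?_).isNilpotent
    rw [map_sub, map_pow, hxew, he'.add_sub_add_sq hcomm]
    exact hw'_mul _
  set e := 1 - (1 - x ^ (m + 1)) ^ (m + 1)
  have he : IsIdempotentElem e :=
    isIdempotentElem_one_sub_one_sub_pow_pow x _ (by rw [pow_succ, hm, zero_mul])
  have hxe : Commute x e := (Commute.one_right x).sub_right
    (((Commute.one_right x).sub_right ((Commute.refl x).pow_right _)).pow_right _)
  obtain ⟨c, hc⟩ := he'.exists_add_sub_one_sub_one_sub_pow_pow_eq_mul hcomm m.succ_ne_zero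
  have hw : IsStronglyNilpotent (x - e) := by
    refine IsStronglyNilpotent.of_map φ hker ?_
    simp only [e, map_sub, map_one, map_pow, hxew, hc]
    exact hw'_mul c
  exact ⟨e, x - e, he, hw, (add_sub_cancel e x).symm, (hxe.symm.sub_right (.refl e)).eq⟩

theorem StronglyPCleanRing.of_ker (φ : S →+* T) (hker : ∀ k, φ k = 0 → IsStronglyNilpotent k)
    (h : StronglyPCleanRing T) : StronglyPCleanRing S := fun x =>
  (h (φ x)).of_map φ hker

end StronglyPClean

theorem RingCon.map_surjective {R : Type*} [Ring R] {c d : RingCon R} (h : c ≤ d) :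
    Function.Surjective (c.map d h) := fun z => by
  obtain ⟨a, rfl⟩ := d.mk'_surjective z
  exact ⟨c.mk' a, rfl⟩

namespace TwoSidedIdeal

variable {R : Type*} [Ring R] {I : TwoSidedIdeal R}

theorem idealPow_le {n : ℕ} (hn : n ≠ 0) : I.idealPow n ≤ I := by
  refine span_le.mpr ?_
  rintro _ ⟨f, hf, rfl⟩
  obtain ⟨m, rfl⟩ := Nat.exists_eq_succ_of_ne_zero hn
  rw [List.ofFn_succ, List.prod_cons]
  exact mul_mem_right _ _ _ (hf 0)

theorem mul_mem_idealPow_succ {n : ℕ} {x c : R} (hx : x ∈ I.idealPow n) (hc : c ∈ I) :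
    x * c ∈ I.idealPow (n + 1) := by
  induction hx using span_induction generalizing c with
  | mem _ h =>
    obtain ⟨f, hf, rfl⟩ := h
    refine subset_span ⟨Fin.snoc f c, Fin.lastCases (by simpa using hc) (by simpa using hf), ?_⟩
    rw [List.ofFn_succ', List.prod_concat]
    simp only [Fin.snoc_castSucc, Fin.snoc_last]
  | zero => rw [zero_mul]; exact zero_mem _
  | add _ _ _ _ hx hy => simpa only [add_mul] using add_mem _ (hx hc) (hy hc)
  | neg _ _ hx => simpa only [neg_mul] using neg_mem _ (hx hc)
  | left_absorb a _ _ hx => simpa only [mul_assoc] using mul_mem_left _ a _ (hx hc)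
  | right_absorb b _ _ hx => simpa only [mul_assoc] using hx (mul_mem_left _ b _ hc)

theorem isStronglyNilpotent_mk'_of_mem {n : ℕ} (hn : n ≠ 0) {a : R} (ha : a ∈ I) :
    IsStronglyNilpotent ((I.idealPow n).ringCon.mk' a) := by
  intro f hf0 hf
  obtain ⟨g, hg0, hg, hgf⟩ :=
    IsStronglyNilpotent.exists_lift_seq_of_surjective _ (RingCon.mk'_surjective _) a hf0 hf
  have hmem (i : ℕ) : g i ∈ I.idealPow (i + 1) := by
    induction i with
    | zero => exact subset_span ⟨fun _ => a, fun _ => ha, by simp [hg0]⟩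
    | succ i ih =>
      obtain ⟨r, hr⟩ := hg i
      rw [hr]
      exact mul_mem_idealPow_succ (mul_mem_right _ _ r ih) (idealPow_le i.succ_ne_zero ih)
  obtain ⟨m, rfl⟩ := Nat.exists_eq_succ_of_ne_zero hn
  refine ⟨m, ?_⟩
  rw [← hgf m, ← mem_ker, ker_ringCon_mk']
  exact hmem m

end TwoSidedIdeal

/-- **Theorem 2.8.** Let `I` be a two-sided ideal of a ring `R`. The following
are equivalent: (1) `R/I` is strongly P-clean; (2) `R/Iⁿ` is strongly P-clean
for some positive integer `n`; (3) `R/Iⁿ` is strongly P-clean for all positive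
integers `n`. -/
theorem stronglyPCleanRing_quotient_pow_tfae
    (R : Type*) [Ring R] (I : TwoSidedIdeal R) :
    [StronglyPCleanRing I.ringCon.Quotient,
     ∃ n : ℕ, 0 < n ∧ StronglyPCleanRing (I.idealPow n).ringCon.Quotient,
     ∀ n : ℕ, 0 < n → StronglyPCleanRing (I.idealPow n).ringCon.Quotient].TFAE := by
  have hle {n : ℕ} (hn : 0 < n) :=
    TwoSidedIdeal.ringCon_le_iff.mp (TwoSidedIdeal.idealPow_le (I := I) hn.ne')
  tfae_have 1 → 3 := fun h n hn => h.of_ker (RingCon.map _ _ (hle hn)) fun z hz => by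
    obtain ⟨a, rfl⟩ := RingCon.mk'_surjective _ z
    have ha : a ∈ I := by
      rw [← TwoSidedIdeal.ker_ringCon_mk' I, TwoSidedIdeal.mem_ker]
      exact hz
    exact TwoSidedIdeal.isStronglyNilpotent_mk'_of_mem hn.ne' ha
  tfae_have 3 → 2 := fun h => ⟨1, one_pos, h 1 one_pos⟩
  tfae_have 2 → 1 := fun ⟨n, hn, h⟩ =>
    h.of_surjective (RingCon.map _ _ (hle hn)) (RingCon.map_surjective _)
  tfae_finish
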